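/- Let $\mathbb{T}^2=\mathbb{R}^2/\mathbb{Z}^2$, let $\bar A$ be the homeomorphism of $\mathbb{T}^2$ induced by $A=\begin{pmatrix}2&1\\1&1\end{pmatrix}$, let $T:\mathbb{T}^2\times\mathbb{R}\to\mathbb{T}^2\times\mathbb{R}$ be the homeomorphism $T(v,t)=(\bar A v,t-1)$, and let $W$ be the quotient space of $\mathbb{T}^2\times\mathbb{R}$ by the $\mathbb{Z}$-action generated by $T$, with quotient map $\pi$. Let $Y_s:W\to W$ denote the suspension flow induced by $(v,t)\mapsto(v,t+s)$. For $B\in\{B_1,B_3\}$ where $B_1=\begin{pmatrix}-1&0\\1&1\end{pmatrix}$ and $B_3=\begin{pmatrix}1&0\\-1&-1\end{pmatrix}$, the map $G(v,t)=(\bar B v,1-t)$ on $\mathbb{T}^2\times\mathbb{R}$ satisfies $G\circ T=T^{-1}\circ G$, hence descends to a homeomorphism $g:W\to W$ with $\pi\circ G=g\circ\pi$, and this $g$ satisfies $g\circ Y_s=Y_{-s}\circ g$ for all $s\in\mathbb{R}$. -/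
import Mathlib


open Topology

/-- The integer lattice `ℤ² ⊂ ℝ²`. -/
def intLattice : AddSubgroup (ℝ × ℝ) where
  carrier := {v | (∃ m : ℤ, v.1 = (m : ℝ)) ∧ (∃ n : ℤ, v.2 = (n : ℝ))}
  zero_mem' := ⟨⟨0, by simp⟩, ⟨0, by simp⟩⟩
  add_mem' := by
    rintro a b ⟨⟨m₁, h₁⟩, ⟨n₁, h₂⟩⟩ ⟨⟨m₂, h₃⟩, ⟨n₂, h₄⟩⟩
    exact ⟨⟨m₁ + m₂, by simp [Prod.fst_add, h₁, h₃]⟩,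
           ⟨n₁ + n₂, by simp [Prod.snd_add, h₂, h₄]⟩⟩
  neg_mem' := by
    rintro a ⟨⟨m, h₁⟩, ⟨n, h₂⟩⟩
    exact ⟨⟨-m, by simp [h₁]⟩, ⟨-n, by simp [h₂]⟩⟩

/-- The torus `𝕋² = ℝ²/ℤ²`, a topological additive group. -/
abbrev Torus2 := (ℝ × ℝ) ⧸ intLattice

/-- The invertible linear action of `A = !![2,1;1,1]` on `ℝ²`. -/
def AEquiv : ℝ × ℝ ≃+ ℝ × ℝ where
  toFun v := (2 * v.1 + v.2, v.1 + v.2)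
  invFun v := (v.1 - v.2, -v.1 + 2 * v.2)
  left_inv v := by simp [Prod.ext_iff]; constructor <;> ring
  right_inv v := by simp [Prod.ext_iff]; constructor <;> ring
  map_add' a b := by simp [Prod.ext_iff]; constructor <;> ring

lemma AEquiv_map_lattice : intLattice.map (AEquiv : ℝ × ℝ →+ ℝ × ℝ) = intLattice := by
  ext v
  rw [AddSubgroup.mem_map]
  constructor
  · rintro ⟨w, ⟨⟨m, h₁⟩, ⟨n, h₂⟩⟩, rfl⟩
    exact ⟨⟨2 * m + n, by simp [AEquiv, h₁, h₂]⟩, ⟨m + n, by simp [AEquiv, h₁, h₂]⟩⟩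
  · rintro ⟨⟨m, h₁⟩, ⟨n, h₂⟩⟩
    refine ⟨((m : ℝ) - n, -(m : ℝ) + 2 * n), ⟨⟨m - n, by push_cast; ring⟩,
      ⟨-m + 2 * n, by push_cast; ring⟩⟩, ?_⟩
    have : v = ((m : ℝ), (n : ℝ)) := Prod.ext h₁ h₂
    simp [AEquiv, this, Prod.ext_iff]
    constructor <;> ring

/-- The homeomorphism `Ā` of the torus `ℝ²/ℤ²` induced by `A = !![2,1;1,1]`. -/
def Abar : Torus2 ≃+ Torus2 :=
  QuotientAddGroup.congr intLattice intLattice AEquiv AEquiv_map_lattice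

/-- The deck transformation `T(v,t) = (Ā v, t - 1)` of `𝕋² × ℝ` whose mapping-torus
quotient is the sol-manifold `W`. -/
def deckT : Equiv.Perm (Torus2 × ℝ) :=
  Abar.toEquiv.prodCongr (Equiv.addRight (-1 : ℝ))

/-- The linear action of `B₁ = !![-1,0;1,1]` on `ℝ²` (an involution). -/
def B1Equiv : ℝ × ℝ ≃+ ℝ × ℝ where
  toFun v := (-v.1, v.1 + v.2)
  invFun v := (-v.1, v.1 + v.2)
  left_inv v := by simp [Prod.ext_iff]
  right_inv v := by simp [Prod.ext_iff]
  map_add' a b := by simp [Prod.ext_iff]; constructor <;> ring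

/-- The linear action of `B₃ = !![1,0;-1,-1]` on `ℝ²` (an involution). -/
def B3Equiv : ℝ × ℝ ≃+ ℝ × ℝ where
  toFun v := (v.1, -v.1 - v.2)
  invFun v := (v.1, -v.1 - v.2)
  left_inv v := by simp [Prod.ext_iff]
  right_inv v := by simp [Prod.ext_iff]
  map_add' a b := by simp [Prod.ext_iff]; ring

lemma B1Equiv_map_lattice : intLattice.map (B1Equiv : ℝ × ℝ →+ ℝ × ℝ) = intLattice := by
  ext v
  rw [AddSubgroup.mem_map]
  constructor
  · rintro ⟨w, ⟨⟨m, h₁⟩, ⟨n, h₂⟩⟩, rfl⟩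
    exact ⟨⟨-m, by simp [B1Equiv, h₁]⟩, ⟨m + n, by simp [B1Equiv, h₁, h₂]⟩⟩
  · rintro ⟨⟨m, h₁⟩, ⟨n, h₂⟩⟩
    refine ⟨(-(m : ℝ), (m : ℝ) + n), ⟨⟨-m, by push_cast; ring⟩,
      ⟨m + n, by push_cast; ring⟩⟩, ?_⟩
    have : v = ((m : ℝ), (n : ℝ)) := Prod.ext h₁ h₂
    simp [B1Equiv, this, Prod.ext_iff]

lemma B3Equiv_map_lattice : intLattice.map (B3Equiv : ℝ × ℝ →+ ℝ × ℝ) = intLattice := by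
  ext v
  rw [AddSubgroup.mem_map]
  constructor
  · rintro ⟨w, ⟨⟨m, h₁⟩, ⟨n, h₂⟩⟩, rfl⟩
    exact ⟨⟨m, by simp [B3Equiv, h₁]⟩, ⟨-m - n, by simp [B3Equiv, h₁, h₂]⟩⟩
  · rintro ⟨⟨m, h₁⟩, ⟨n, h₂⟩⟩
    refine ⟨((m : ℝ), -(m : ℝ) - n), ⟨⟨m, by push_cast; ring⟩,
      ⟨-m - n, by push_cast; ring⟩⟩, ?_⟩
    have : v = ((m : ℝ), (n : ℝ)) := Prod.ext h₁ h₂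
    simp [B3Equiv, this, Prod.ext_iff]

/-- The homeomorphism `B̄₁` of the torus induced by `B₁ = !![-1,0;1,1]`. -/
def B1bar : Torus2 ≃+ Torus2 :=
  QuotientAddGroup.congr intLattice intLattice B1Equiv B1Equiv_map_lattice

/-- The homeomorphism `B̄₃` of the torus induced by `B₃ = !![1,0;-1,-1]`. -/
def B3bar : Torus2 ≃+ Torus2 :=
  QuotientAddGroup.congr intLattice intLattice B3Equiv B3Equiv_map_lattice


section Aux

open QuotientAddGroup

lemma Abar_mk (v : ℝ × ℝ) : Abar (v : Torus2) = ((AEquiv v : ℝ × ℝ) : Torus2) :=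
  rfl

lemma Abar_symm_mk (w : ℝ × ℝ) :
    Abar.symm (w : Torus2) = ((AEquiv.symm w : ℝ × ℝ) : Torus2) := by
  apply Abar.injective
  rw [AddEquiv.apply_symm_apply, Abar_mk, AEquiv.apply_symm_apply]

lemma Bb_mk (Bb : Torus2 ≃+ Torus2) (hB : Bb = B1bar ∨ Bb = B3bar) :
    ∃ E : ℝ × ℝ ≃+ ℝ × ℝ, Continuous E ∧ (∀ v, E (E v) = v) ∧
      (∀ v, E (AEquiv v) = AEquiv.symm (E v)) ∧
      ∀ v : ℝ × ℝ, Bb (v : Torus2) = ((E v : ℝ × ℝ) : Torus2) := by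
  rcases hB with rfl | rfl
  · refine ⟨B1Equiv, ?_, ?_, ?_, fun v => rfl⟩
    · show Continuous fun v : ℝ × ℝ => ((-v.1, v.1 + v.2) : ℝ × ℝ); fun_prop
    · intro v; simp [B1Equiv]
    · intro v
      apply AEquiv.injective
      rw [AddEquiv.apply_symm_apply]
      simp only [B1Equiv, AEquiv, AddEquiv.coe_mk, Equiv.coe_fn_mk, Prod.mk.injEq]
      constructor <;> ring
  · refine ⟨B3Equiv, ?_, ?_, ?_, fun v => rfl⟩
    · show Continuous fun v : ℝ × ℝ => ((v.1, -v.1 - v.2) : ℝ × ℝ); fun_prop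
    · intro v; simp [B3Equiv]
    · intro v
      apply AEquiv.injective
      rw [AddEquiv.apply_symm_apply]
      simp only [B3Equiv, AEquiv, AddEquiv.coe_mk, Equiv.coe_fn_mk, Prod.mk.injEq]
      constructor <;> ring

lemma Bb_cont (Bb : Torus2 ≃+ Torus2) (hB : Bb = B1bar ∨ Bb = B3bar) :
    Continuous Bb := by
  obtain ⟨E, hEc, -, -, hEmk⟩ := Bb_mk Bb hB
  rw [(QuotientAddGroup.isQuotientMap_mk intLattice).continuous_iff]
  have : (Bb ∘ (QuotientAddGroup.mk : ℝ × ℝ → Torus2)) =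
      (QuotientAddGroup.mk : ℝ × ℝ → Torus2) ∘ E := funext hEmk
  rw [this]
  exact continuous_quot_mk.comp hEc

lemma Bb_invol (Bb : Torus2 ≃+ Torus2) (hB : Bb = B1bar ∨ Bb = B3bar) (x : Torus2) :
    Bb (Bb x) = x := by
  obtain ⟨E, -, hE2, -, hEmk⟩ := Bb_mk Bb hB
  induction x using QuotientAddGroup.induction_on with
  | H v => rw [hEmk, hEmk, hE2]

lemma Bb_comm (Bb : Torus2 ≃+ Torus2) (hB : Bb = B1bar ∨ Bb = B3bar) (x : Torus2) :
    Bb (Abar x) = Abar.symm (Bb x) := by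
  obtain ⟨E, -, -, hEA, hEmk⟩ := Bb_mk Bb hB
  induction x using QuotientAddGroup.induction_on with
  | H v => rw [Abar_mk, hEmk, hEmk, Abar_symm_mk, hEA]

end Aux

/-- Let `W` be the quotient of `𝕋² × ℝ` by the `ℤ`-action generated by the deck
transformation `T(v,t) = (Ā v, t-1)`, with (topological) quotient map `π`, and let
`Y_s` be the suspension flow on `W` induced by `(v,t) ↦ (v, t+s)`.  For
`B̄ ∈ {B̄₁, B̄₃}` (induced by `B₁ = !![-1,0;1,1]` resp. `B₃ = !![1,0;-1,-1]`), the map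
`G(v,t) = (B̄ v, 1-t)` satisfies `G ∘ T = T⁻¹ ∘ G`, hence descends to a homeomorphism
`g : W → W` with `π ∘ G = g ∘ π`, and this `g` satisfies `g ∘ Y_s = Y_{-s} ∘ g` for all
`s ∈ ℝ`. -/

theorem stmt13 {W : Type*} [TopologicalSpace W] (π : Torus2 × ℝ → W)
    (hπ : IsQuotientMap π)
    (hfib : ∀ a b : Torus2 × ℝ, π a = π b ↔ ∃ n : ℤ, (deckT ^ n) a = b)
    (Y : ℝ → W → W)
    (hY : ∀ (s : ℝ) (v : Torus2) (t : ℝ), Y s (π (v, t)) = π (v, t + s))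
    (Bb : Torus2 ≃+ Torus2) (hB : Bb = B1bar ∨ Bb = B3bar) :
    ((fun p : Torus2 × ℝ => (Bb p.1, 1 - p.2)) ∘ deckT =
      deckT.symm ∘ (fun p : Torus2 × ℝ => (Bb p.1, 1 - p.2))) ∧
    ∃ g : W ≃ₜ W, (∀ p : Torus2 × ℝ, g (π p) = π (Bb p.1, 1 - p.2)) ∧
      ∀ (s : ℝ) (w : W), g (Y s w) = Y (-s) (g w) := by
  have hinv := Bb_invol Bb hB
  have hcomm := Bb_comm Bb hB
  -- the involution G on 𝕋² × ℝ as a permutation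
  set Ge : Equiv.Perm (Torus2 × ℝ) :=
    { toFun := fun p => (Bb p.1, 1 - p.2)
      invFun := fun p => (Bb p.1, 1 - p.2)
      left_inv := fun p => by simp [hinv]
      right_inv := fun p => by simp [hinv] } with hGe
  have hGeapp : ∀ p : Torus2 × ℝ, Ge p = (Bb p.1, 1 - p.2) := fun p => rfl
  have hdeck : ∀ p : Torus2 × ℝ, deckT p = (Abar p.1, p.2 - 1) := by
    intro p; simp [deckT, Equiv.prodCongr]; rfl
  have hdecksymm : ∀ p : Torus2 × ℝ, deckT.symm p = (Abar.symm p.1, p.2 + 1) := by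
    intro p; simp [deckT, Equiv.prodCongr]; rfl
  have hconj : Ge * deckT = deckT⁻¹ * Ge := by
    refine Equiv.ext fun p => ?_
    simp only [Equiv.Perm.mul_apply, Equiv.Perm.inv_def]
    rw [hdeck, hGeapp, hGeapp, hdecksymm]
    refine Prod.mk.injEq _ _ _ _ ▸ ⟨hcomm p.1, ?_⟩
    show 1 - (p.2 - 1) = (1 - p.2) + 1
    ring
  have hconjn : ∀ (n : ℤ) (p : Torus2 × ℝ),
      Ge ((deckT ^ n) p) = (deckT ^ (-n)) (Ge p) := by
    intro n p
    have h1 : Ge * deckT * Ge⁻¹ = deckT⁻¹ := by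
      rw [hconj, mul_assoc, mul_inv_cancel, mul_one]
    have h2 : Ge * deckT ^ n * Ge⁻¹ = deckT ^ (-n) := by
      have := map_zpow (MulAut.conj Ge) deckT n
      simp only [MulAut.conj_apply] at this
      rw [this, h1, ← zpow_neg_one, ← zpow_mul]
      ring_nf
    have h3 : Ge * deckT ^ n = deckT ^ (-n) * Ge := by
      rw [← h2, mul_assoc, inv_mul_cancel, mul_one]
    calc Ge ((deckT ^ n) p) = (Ge * deckT ^ n) p := rfl
      _ = (deckT ^ (-n) * Ge) p := by rw [h3]
      _ = (deckT ^ (-n)) (Ge p) := rfl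
  -- π respects G
  have glem : ∀ a b : Torus2 × ℝ, π a = π b → π (Ge a) = π (Ge b) := by
    intro a b hab
    obtain ⟨n, hn⟩ := (hfib a b).mp hab
    exact (hfib (Ge a) (Ge b)).mpr ⟨-n, by rw [← hconjn n a, hn]⟩
  obtain ⟨g0, hg0⟩ : ∃ g0 : W → W, ∀ p : Torus2 × ℝ, g0 (π p) = π (Ge p) :=
    ⟨fun w => π (Ge (Function.surjInv hπ.surjective w)),
      fun p => glem _ _ (Function.surjInv_eq hπ.surjective (π p))⟩
  have hGeGe : ∀ p : Torus2 × ℝ, Ge (Ge p) = p := fun p => Ge.left_inv p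
  have hg0g0 : ∀ w : W, g0 (g0 w) = w := by
    intro w
    obtain ⟨p, rfl⟩ := hπ.surjective w
    rw [hg0, hg0, hGeGe]
  have hGecont : Continuous (Ge : Torus2 × ℝ → Torus2 × ℝ) := by
    have hb := Bb_cont Bb hB
    show Continuous fun p : Torus2 × ℝ => ((Bb p.1, 1 - p.2) : Torus2 × ℝ)
    exact (hb.comp continuous_fst).prodMk (continuous_const.sub continuous_snd)
  have hg0cont : Continuous g0 := by
    rw [hπ.continuous_iff]
    have : (g0 ∘ π) = π ∘ (Ge : Torus2 × ℝ → Torus2 × ℝ) := funext fun p => hg0 p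
    rw [this]
    exact hπ.continuous.comp hGecont
  constructor
  · funext p
    simp only [Function.comp_apply]
    rw [hdeck, hdecksymm]
    refine Prod.mk.injEq _ _ _ _ ▸ ⟨hcomm p.1, ?_⟩
    show 1 - (p.2 - 1) = (1 - p.2) + 1
    ring
  · refine ⟨⟨⟨g0, g0, hg0g0, hg0g0⟩, hg0cont, hg0cont⟩, fun p => hg0 p, ?_⟩
    intro s w
    obtain ⟨⟨v, t⟩, rfl⟩ := hπ.surjective w
    show g0 (Y s (π (v, t))) = Y (-s) (g0 (π (v, t)))
    rw [hY, hg0, hg0, hGeapp, hGeapp, hY]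
    have : 1 - (t + s) = 1 - t + -s := by ring
    rw [this]
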